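/- arXiv:math/0607393 — 4 statements merged into one kernel-verified Lean document; each statement's English description precedes it below -/
import Mathlib

section
/- Let F : ℝⁿ → ℝⁿ be a differentiable map such that det(DF_x) ≠ 0 for all x ∈ ℝⁿ. For t ∈ ℝ, let F_t : ℝⁿ → ℝⁿ denote the map F_t(x) = F(x) − t·x. If there exists a sequence {t_m} of real numbers converging to 0 such that every map F_{t_m} : ℝⁿ → ℝⁿ is injective, then F is injective. -/
/-!
Suppose `F a = F b` with `a ≠ b` and take disjoint closed balls `K₁ ∋ a`, `K₂ ∋ b`. A map with
invertible derivative everywhere is open, so `F '' K₁ ∩ F '' K₂` is a neighbourhood of `F a` and has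
positive volume. On the other hand `F_m '' K` lies in a shrinking thickening of `F '' K`, so the
change of variables formula for the injective maps `F_m` and Fatou's lemma give
`vol (F '' K) = ∫_K |det DF|` for every compact `K`. Additivity of the integral over `K₁ ∪ K₂` then
forces `F '' K₁ ∩ F '' K₂` to be null.
-/

open Asymptotics Filter Function MeasureTheory Metric Set
open scoped Topology

section

variable {𝕜 E F : Type*} [NontriviallyNormedField 𝕜]
  [NormedAddCommGroup E] [NormedSpace 𝕜 E] [NormedAddCommGroup F] [NormedSpace 𝕜 F]

theorem HasFDerivAt.isBigO_sub_rev {f : E → F} {e : E ≃L[𝕜] F} {a : E}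
    (hf : HasFDerivAt f (e : E →L[𝕜] F) a) :
    (fun x => x - a) =O[𝓝 a] fun x => f x - f a := by
  have hlin : (fun x => x - a) =O[𝓝 a] fun x => e (x - a) := e.isBigO_sub_rev _ _
  have hequiv : (fun x => f x - f a) ~[𝓝 a] fun x => e (x - a) :=
    hf.isLittleO.trans_isBigO hlin
  exact hlin.trans hequiv.isBigO_symm

end

section

variable {E F : Type*} [NormedAddCommGroup E] [NormedSpace ℝ E]
  [NormedAddCommGroup F] [NormedSpace ℝ F]

/-- If `f x₀ ≠ z`, then along `s ↦ x₀ + s • v` with `f' v = z - f x₀` the difference `f - z` is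
`(1 - s) • (f x₀ - z)` to first order, contradicting minimality. -/
theorem HasFDerivAt.eq_of_isLocalMin_norm_sub {f : E → F} {f' : E →L[ℝ] F} {x₀ : E} {z : F}
    (hf : HasFDerivAt f f' x₀) (hf' : Surjective f') (hmin : IsLocalMin (fun x => ‖f x - z‖) x₀) :
    f x₀ = z := by
  set w := f x₀ - z
  by_contra hne
  have hw : 0 < ‖w‖ := norm_pos_iff.2 (sub_ne_zero.2 hne)
  obtain ⟨v, hv⟩ := hf' (-w)
  have hline : HasDerivAt (fun s : ℝ => x₀ + s • v) v 0 := by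
    simpa using ((hasDerivAt_id (0 : ℝ)).smul_const v).const_add x₀
  have hderiv : HasDerivAt (fun s : ℝ => f (x₀ + s • v) - z) (-w) 0 := by
    simpa [hv] using (hf.comp_hasDerivAt_of_eq 0 hline (by simp)).sub_const z
  have hmin_line : ∀ᶠ s in 𝓝 (0 : ℝ), ‖w‖ ≤ ‖f (x₀ + s • v) - z‖ := by
    simpa [IsLocalMin, IsMinFilter, w] using
      IsLocalMin.comp_continuous (g := fun s : ℝ => x₀ + s • v) (by simpa using hmin)
        hline.continuousAt
  have happrox : ∀ᶠ s in 𝓝 (0 : ℝ), ‖f (x₀ + s • v) - f x₀ + s • w‖ ≤ ‖w‖ / 2 * |s| := by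
    simpa using hderiv.isLittleO.def (half_pos hw)
  have hsmall : ∀ᶠ s in 𝓝[>] (0 : ℝ), s ∈ Ioo 0 1 := Ioo_mem_nhdsGT one_pos
  obtain ⟨s, ⟨hs₀, hs₁⟩, hs_min, hs_approx⟩ :=
    (hsmall.and ((hmin_line.and happrox).filter_mono nhdsWithin_le_nhds)).exists
  rw [_root_.abs_of_pos hs₀] at hs_approx
  have : ‖f (x₀ + s • v) - z‖ ≤ (1 - s) * ‖w‖ + ‖w‖ / 2 * s := by
    calc ‖f (x₀ + s • v) - z‖
        = ‖(1 - s) • w + (f (x₀ + s • v) - f x₀ + s • w)‖ := by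
          congr 1; simp only [w, sub_smul, one_smul]; abel
      _ ≤ (1 - s) * ‖w‖ + ‖w‖ / 2 * s := by
        grw [norm_add_le, norm_smul, Real.norm_of_nonneg (by linarith : 0 ≤ 1 - s), hs_approx]
  nlinarith

/-- Around `a`, `f` expands distances by at least a fixed factor, so a minimizer of `‖f x - z‖`
over a small closed ball is an interior point when `z` is close to `f a`; there `f x = z`. -/
theorem isOpenMap_of_hasFDerivAt_equiv [ProperSpace E] {f : E → F} {f' : E → E ≃L[ℝ] F}
    (hf : ∀ x, HasFDerivAt f (f' x : E →L[ℝ] F) x) : IsOpenMap f := by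
  have hcont : Continuous f := continuous_iff_continuousAt.2 fun x => (hf x).continuousAt
  refine isOpenMap_iff_nhds_le.2 fun a s hs => ?_
  obtain ⟨c, hc, hbig⟩ := (hf a).isBigO_sub_rev.exists_pos
  obtain ⟨r, hr, hball⟩ := nhds_basis_closedBall.eventually_iff.1 (hbig.bound.and hs)
  refine mem_of_superset (ball_mem_nhds (f a) (by positivity : 0 < r / (2 * c))) fun z hz => ?_
  rw [mem_ball_comm, mem_ball, dist_eq_norm] at hz
  obtain ⟨x₀, hx₀, hmin⟩ := (isCompact_closedBall a r).exists_isMinOn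
    (nonempty_closedBall.2 hr.le) (hcont.sub continuous_const).norm.continuousOn
  have hx₀_near : ‖f x₀ - z‖ < r / (2 * c) := (hmin (mem_closedBall_self hr.le)).trans_lt hz
  have hx₀_interior : x₀ ∈ ball a r := by
    refine lt_of_le_of_ne (mem_closedBall.1 hx₀) fun hedge => ?_
    have hexp : r ≤ c * ‖f x₀ - f a‖ := by
      simpa [← dist_eq_norm, hedge] using (hball hx₀).1
    have : ‖f x₀ - f a‖ < r / c := by
      calc ‖f x₀ - f a‖ ≤ ‖f x₀ - z‖ + ‖f a - z‖ := by
            simpa only [dist_eq_norm] using dist_triangle_right (f x₀) (f a) z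
        _ < r / (2 * c) + r / (2 * c) := add_lt_add hx₀_near hz
        _ = r / c := by field_simp; ring
    rw [lt_div_iff₀ hc] at this
    linarith
  have hlocal : IsLocalMin (fun x => ‖f x - z‖) x₀ :=
    hmin.isLocalMin (closedBall_mem_nhds_of_mem hx₀_interior)
  have hx₀z : f x₀ = z := (hf x₀).eq_of_isLocalMin_norm_sub (f' x₀).surjective hlocal
  exact hx₀z ▸ (hball hx₀).2

end

theorem limsup_measure_image_le_of_dist_le {ι X Y : Type*} [MetricSpace Y] [ProperSpace Y]
    [MeasurableSpace Y] [OpensMeasurableSpace Y] {μ : Measure Y} [IsFiniteMeasureOnCompacts μ]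
    {l : Filter ι} [l.NeBot] {f : X → Y} {g : ι → X → Y} {K : Set X} (hK : IsCompact (f '' K))
    {ε : ι → ℝ} (hε : Tendsto ε l (𝓝 0)) (hg : ∀ i, ∀ x ∈ K, dist (g i x) (f x) ≤ ε i) :
    limsup (fun i => μ (g i '' K)) l ≤ μ (f '' K) := by
  have hsub : ∀ i, g i '' K ⊆ cthickening (ε i) (f '' K) := by
    rintro i _ ⟨x, hx, rfl⟩
    exact mem_cthickening_of_dist_le _ (f x) _ _ (mem_image_of_mem f hx) (hg i x hx)
  calc limsup (fun i => μ (g i '' K)) l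
      ≤ limsup (fun i => μ (cthickening (ε i) (f '' K))) l :=
        limsup_le_limsup (.of_forall fun i => measure_mono (hsub i))
    _ = μ (f '' K) := ((tendsto_measure_cthickening_of_isCompact hK).comp hε).limsup_eq

section

variable {E : Type*} [NormedAddCommGroup E] [NormedSpace ℝ E] [FiniteDimensional ℝ E]
  [MeasurableSpace E] [BorelSpace E] (μ : Measure E) [μ.IsAddHaarMeasure]

theorem addHaar_image_eq_lintegral_abs_det_fderiv_of_injective_sub_smul {f : E → E}
    (hf : Differentiable ℝ f) {t : ℕ → ℝ} (ht : Tendsto t atTop (𝓝 0))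
    (hinj : ∀ m, Injective fun x => f x - t m • x) {K : Set E} (hK : IsCompact K) :
    μ (f '' K) = ∫⁻ x in K, ENNReal.ofReal |(fderiv ℝ f x).det| ∂μ := by
  refine le_antisymm (addHaar_image_le_lintegral_abs_det_fderiv μ hK.measurableSet
    fun x _ => (hf x).hasFDerivAt.hasFDerivWithinAt) ?_
  set D : ℕ → E → E →L[ℝ] E := fun m x => fderiv ℝ f x - t m • ContinuousLinearMap.id ℝ E
  have hD : ∀ m x, HasFDerivAt (fun x => f x - t m • x) (D m x) x := fun m x =>
    (hf x).hasFDerivAt.sub ((hasFDerivAt_id x).const_smul (t m))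
  have hjac : Continuous fun p : ℝ × (E →L[ℝ] E) =>
      ENNReal.ofReal |(p.2 - p.1 • ContinuousLinearMap.id ℝ E).det| :=
    ENNReal.continuous_ofReal.comp (ContinuousLinearMap.continuous_det.comp (by fun_prop)).abs
  have hlim : ∀ x, Tendsto (fun m => ENNReal.ofReal |(D m x).det|) atTop
      (𝓝 (ENNReal.ofReal |(fderiv ℝ f x).det|)) := fun x => by
    have := (hjac.tendsto (0, fderiv ℝ f x)).comp (ht.prodMk_nhds tendsto_const_nhds)
    rwa [zero_smul, sub_zero] at this
  have hmeas : ∀ m, Measurable fun x => ENNReal.ofReal |(D m x).det| := fun m =>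
    (hjac.comp (continuous_const.prodMk continuous_id)).measurable.comp (measurable_fderiv ℝ f)
  obtain ⟨R, hR⟩ := hK.isBounded.subset_closedBall 0
  have hdist : ∀ m, ∀ x ∈ K, dist (f x - t m • x) (f x) ≤ |t m| * R := fun m x hx => by
    simpa [dist_eq_norm, norm_smul] using
      mul_le_mul_of_nonneg_left (mem_closedBall_zero_iff.1 (hR hx)) (abs_nonneg (t m))
  calc ∫⁻ x in K, ENNReal.ofReal |(fderiv ℝ f x).det| ∂μ
      = ∫⁻ x in K, liminf (fun m => ENNReal.ofReal |(D m x).det|) atTop ∂μ :=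
        lintegral_congr fun x => (hlim x).liminf_eq.symm
    _ ≤ liminf (fun m => ∫⁻ x in K, ENNReal.ofReal |(D m x).det| ∂μ) atTop :=
        lintegral_liminf_le hmeas
    _ = liminf (fun m => μ ((fun x => f x - t m • x) '' K)) atTop := by
        congr 1; ext m
        exact lintegral_abs_det_fderiv_eq_addHaar_image μ hK.measurableSet
          (fun x _ => (hD m x).hasFDerivWithinAt) (hinj m).injOn
    _ ≤ limsup (fun m => μ ((fun x => f x - t m • x) '' K)) atTop := liminf_le_limsup
    _ ≤ μ (f '' K) := limsup_measure_image_le_of_dist_le (hK.image hf.continuous)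
        (by simpa using ht.abs.mul_const R) hdist

theorem addHaar_image_inter_image_eq_zero_of_injective_sub_smul {f : E → E}
    (hf : Differentiable ℝ f) {t : ℕ → ℝ} (ht : Tendsto t atTop (𝓝 0))
    (hinj : ∀ m, Injective fun x => f x - t m • x) {K₁ K₂ : Set E} (hK₁ : IsCompact K₁)
    (hK₂ : IsCompact K₂) (hdisj : Disjoint K₁ K₂) :
    μ (f '' K₁ ∩ f '' K₂) = 0 := by
  have himage := fun {K : Set E} (hK : IsCompact K) =>
    addHaar_image_eq_lintegral_abs_det_fderiv_of_injective_sub_smul μ hf ht hinj hK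
  have hadd : μ (f '' K₁ ∪ f '' K₂) = μ (f '' K₁) + μ (f '' K₂) := by
    rw [← image_union, himage (hK₁.union hK₂), himage hK₁, himage hK₂,
      lintegral_union hK₂.measurableSet hdisj]
  have hfin : μ (f '' K₁ ∪ f '' K₂) ≠ ⊤ :=
    ((hK₁.image hf.continuous).union (hK₂.image hf.continuous)).measure_lt_top.ne
  have := measure_union_add_inter (μ := μ) (f '' K₁) (hK₂.image hf.continuous).measurableSet
  rw [← hadd] at this
  exact (ENNReal.add_right_inj hfin).1 (this.trans (add_zero _).symm)

end

theorem stmt6 {n : ℕ} (F : (Fin n → ℝ) → (Fin n → ℝ))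
    (hdiff : Differentiable ℝ F)
    (hdet : ∀ x : Fin n → ℝ, LinearMap.det ((fderiv ℝ F x : (Fin n → ℝ) →L[ℝ] (Fin n → ℝ)) :
      (Fin n → ℝ) →ₗ[ℝ] (Fin n → ℝ)) ≠ 0)
    (t : ℕ → ℝ) (ht : Filter.Tendsto t Filter.atTop (nhds 0))
    (hinj : ∀ m : ℕ, Function.Injective (fun x : Fin n → ℝ => F x - t m • x)) :
    Function.Injective F := by
  intro a b hab
  by_contra hne
  have hab_pos : 0 < dist a b := dist_pos.2 hne
  set ρ := dist a b / 3 with hρ_def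
  have hρ : 0 < ρ := by positivity
  have hdisj : Disjoint (closedBall a ρ) (closedBall b ρ) :=
    closedBall_disjoint_closedBall (by linarith)
  have hopen : IsOpenMap F := isOpenMap_of_hasFDerivAt_equiv
    (f' := fun x => (fderiv ℝ F x).toContinuousLinearEquivOfDetNeZero (hdet x))
    fun x => by simpa using (hdiff x).hasFDerivAt
  have hnhds : F '' closedBall a ρ ∩ F '' closedBall b ρ ∈ 𝓝 (F a) :=
    inter_mem (hopen.image_mem_nhds (closedBall_mem_nhds a hρ))
      (hab ▸ hopen.image_mem_nhds (closedBall_mem_nhds b hρ))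
  exact (Measure.measure_pos_of_mem_nhds volume hnhds).ne'
    (addHaar_image_inter_image_eq_zero_of_injective_sub_smul volume hdiff ht hinj
      (isCompact_closedBall a ρ) (isCompact_closedBall b ρ) hdisj)
end

section
/- Let Y : ℝⁿ → ℝᵐ be a non-constant polynomial map. Then the set S_Y is closed in ℝᵐ, and for every point q ∈ S_Y there exists a non-constant polynomial map φ : ℝ → ℝᵐ such that φ(ℝ) ⊆ S_Y and q ∈ φ(ℝ). -/
/-!
A point `y` lies in `S_Y` exactly when it is a cluster point of `Y` along the cocompact filter, so
`S_Y` is closed. Given `q ∈ S_Y`, take `x_k → ∞` with `Y x_k → q`. On a line through `x_k` along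
which `Y` is not constant, `Y (x_k + t • v_k) = Y x_k + ∑_{j < D} tʲ⁺¹ • B_k j` for a uniform
degree bound `D`, and rescaling `t` makes `‖B_k‖ = 1`. Along a subsequence `B_k → B`, and
`φ c = q + ∑_{j < D} cʲ⁺¹ • B j` is a non-constant polynomial curve through `q`. Normalising
`(x_k, v_k)` and passing to a limit `(z, u) ≠ 0`, the points `x_k + c • v_k` still tend to infinity
unless `z + c • u = 0`, which happens for at most one `c`; their images tend to `φ c`. Hence
`φ c ∈ S_Y` for a dense set of `c`, and so for all `c`.
-/

open Filter Topology Bornology Set Polynomial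

/-- The set of points at which a continuous map is not proper: `y` belongs to this set
iff there is no neighborhood `U` of `y` such that `Y ⁻¹' (closure U)` is compact. -/
def nonProperSet {M N : Type*} [TopologicalSpace M] [TopologicalSpace N] (Y : M → N) : Set N :=
  {y | ¬ ∃ U ∈ nhds y, IsCompact (Y ⁻¹' closure U)}

section NonProperSet

variable {M N : Type*} [TopologicalSpace M] [TopologicalSpace N] [RegularSpace N] {Y : M → N}

theorem mem_nonProperSet_iff_mapClusterPt (hY : Continuous Y) {y : N} :
    y ∈ nonProperSet Y ↔ MapClusterPt y (cocompact M) Y := by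
  simp only [mapClusterPt_iff_frequently, hasBasis_cocompact.frequently_iff, nonProperSet,
    mem_ofPred_eq, not_exists, not_and]
  constructor
  · intro h s hs K hK
    by_contra! hsK
    obtain ⟨U, ⟨hU, hUc⟩, hUs⟩ := (closed_nhds_basis y).mem_iff.1 hs
    refine h U hU (hK.of_isClosed_subset ?_ fun a ha => ?_)
    · rw [hUc.closure_eq]
      exact hUc.preimage hY
    · by_contra haK
      exact hsK a haK (hUs (hUc.closure_eq ▸ ha))
  · intro h U hU hK
    obtain ⟨a, haK, haU⟩ := h U hU _ hK
    exact haK (subset_closure haU)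

theorem isClosed_nonProperSet (hY : Continuous Y) : IsClosed (nonProperSet Y) := by
  have : nonProperSet Y = {y | MapClusterPt y (cocompact M) Y} :=
    ext fun _ => mem_nonProperSet_iff_mapClusterPt hY
  exact this ▸ isClosed_setOfPred_clusterPt

theorem mem_nonProperSet_of_tendsto (hY : Continuous Y) {ι : Type*} {l : Filter ι} [l.NeBot]
    {x : ι → M} (hx : Tendsto x l (cocompact M)) {y : N} (hxy : Tendsto (Y ∘ x) l (𝓝 y)) :
    y ∈ nonProperSet Y :=
  (mem_nonProperSet_iff_mapClusterPt hY).2 (hxy.mapClusterPt.of_comp hx)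

end NonProperSet

theorem subsingleton_setOf_add_smul_eq_zero {K V : Type*} [Field K] [AddCommGroup V] [Module K V]
    {z u : V} (hzu : (z, u) ≠ 0) : {c : K | z + c • u = 0}.Subsingleton := by
  intro c₁ h₁ c₂ h₂
  by_contra hc
  have hu : (c₁ - c₂) • u = 0 := by
    rw [sub_smul, ← add_sub_add_left_eq_sub _ _ z, h₁.out, h₂.out, sub_self]
  obtain rfl := (smul_eq_zero.1 hu).resolve_left (sub_ne_zero.2 hc)
  exact hzu (by simpa using h₁.out)

section ProperNormedSpace

variable {E : Type*} [NormedAddCommGroup E] [ProperSpace E]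

theorem exists_seq_tendsto_of_mem_nonProperSet {N : Type*} [TopologicalSpace N] [RegularSpace N]
    [FirstCountableTopology N] {Y : E → N} (hY : Continuous Y) {q : N} (hq : q ∈ nonProperSet Y) :
    ∃ x : ℕ → E, Tendsto x atTop (cobounded E) ∧ Tendsto (Y ∘ x) atTop (𝓝 q) := by
  have : IsCountablyGenerated (cobounded E) := comap_norm_atTop (E := E) ▸ inferInstance
  rw [mem_nonProperSet_iff_mapClusterPt hY, ← Metric.cobounded_eq_cocompact] at hq
  obtain ⟨x, hxq, hx⟩ := hq.exists_seq_tendsto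
  exact ⟨x, hx, hxq⟩

variable [NormedSpace ℝ E]

theorem exists_subseq_tendsto_cobounded_add_smul {x v : ℕ → E}
    (hx : Tendsto x atTop (cobounded E)) :
    ∃ ψ : ℕ → ℕ, StrictMono ψ ∧
      {c : ℝ | ¬ Tendsto (fun k => x (ψ k) + c • v (ψ k)) atTop (cobounded E)}.Subsingleton := by
  set r : ℕ → ℝ := fun k => ‖(x k, v k)‖
  set p : ℕ → E × E := fun k => (r k)⁻¹ • (x k, v k)
  have hr : Tendsto r atTop atTop :=
    tendsto_atTop_mono (fun k => norm_fst_le (x k, v k)) (tendsto_norm_atTop_iff_cobounded.2 hx)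
  have hxv : ∀ k, x k = r k • (p k).1 ∧ v k = r k • (p k).2 := fun k => by
    refine Prod.ext_iff.1 (?_ : (x k, v k) = r k • p k)
    rcases eq_or_ne (r k) 0 with h | h
    · simpa [h] using norm_eq_zero.1 h
    · simp [p, smul_inv_smul₀ h]
  have hnorm : ∀ k, ‖p k‖ = (r k)⁻¹ * r k := fun k => by
    simp only [p, norm_smul, norm_inv, Real.norm_of_nonneg (norm_nonneg _), r]
  have hp : ∀ k, p k ∈ Metric.closedBall 0 1 := fun k => by
    rw [mem_closedBall_zero_iff, hnorm]
    exact inv_mul_le_one_of_le₀ le_rfl (norm_nonneg _)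
  obtain ⟨⟨z, u⟩, -, ψ, hψ, hpψ⟩ := (isCompact_closedBall (0 : E × E) 1).tendsto_subseq hp
  have hzu : (z, u) ≠ 0 := by
    rw [← norm_ne_zero_iff]
    refine ne_of_eq_of_ne (tendsto_nhds_unique hpψ.norm (tendsto_const_nhds.congr' ?_)) one_ne_zero
    filter_upwards [(hr.comp hψ.tendsto_atTop).eventually_gt_atTop 0] with k hk
    rw [Function.comp_apply, hnorm]
    exact (inv_mul_cancel₀ hk.ne').symm
  refine ⟨ψ, hψ, (subsingleton_setOf_add_smul_eq_zero hzu).anti fun c hc => ?_⟩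
  by_contra hzc
  apply hc
  have hlim : Tendsto (fun k => (p (ψ k)).1 + c • (p (ψ k)).2) atTop (𝓝 (z + c • u)) :=
    ((continuous_fst.add (continuous_const.smul continuous_snd)).tendsto _).comp hpψ
  rw [← tendsto_norm_atTop_iff_cobounded]
  refine ((hr.comp hψ.tendsto_atTop).atTop_mul_pos (norm_pos_iff.2 hzc) hlim.norm).congr fun k => ?_
  rw [(hxv _).1, (hxv _).2, smul_comm c, ← smul_add, norm_smul,
    Real.norm_of_nonneg (norm_nonneg _)]
  rfl

theorem range_subset_nonProperSet_of_tendsto_line {N : Type*} [TopologicalSpace N] [RegularSpace N]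
    {Y : E → N} (hY : Continuous Y) {x v : ℕ → E} (hx : Tendsto x atTop (cobounded E))
    {γ : ℝ → N} (hγ : Continuous γ)
    (hlim : ∀ c, Tendsto (fun k => Y (x k + c • v k)) atTop (𝓝 (γ c))) :
    range γ ⊆ nonProperSet Y := by
  obtain ⟨ψ, hψ, hexc⟩ := exists_subseq_tendsto_cobounded_add_smul (v := v) hx
  have hgood : ∀ c, Tendsto (fun k => x (ψ k) + c • v (ψ k)) atTop (cobounded E) →
      γ c ∈ nonProperSet Y := fun c hc =>
    mem_nonProperSet_of_tendsto hY (Metric.cobounded_eq_cocompact (α := E) ▸ hc)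
      ((hlim c).comp hψ.tendsto_atTop)
  have hdense : Dense {c | γ c ∈ nonProperSet Y} :=
    (hexc.countable.dense_compl ℝ).mono fun c hc => hgood c (not_not.1 hc)
  rintro _ ⟨c, rfl⟩
  exact ((isClosed_nonProperSet hY).preimage hγ).closure_subset (hdense c)

end ProperNormedSpace

theorem MvPolynomial.natDegree_aeval_le {σ R : Type*} [CommSemiring R] {f : σ → R[X]} {d : ℕ}
    (hf : ∀ i, (f i).natDegree ≤ d) (p : MvPolynomial σ R) :
    (MvPolynomial.aeval f p).natDegree ≤ p.totalDegree * d := by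
  conv_lhs => rw [p.as_sum, map_sum]
  refine natDegree_sum_le_of_forall_le _ _ fun s hs => ?_
  rw [MvPolynomial.aeval_monomial, Polynomial.algebraMap_eq]
  refine (natDegree_C_mul_le _ _).trans <| (natDegree_prod_le _ _).trans ?_
  calc ∑ i ∈ s.support, (f i ^ s i).natDegree ≤ ∑ i ∈ s.support, s i * d :=
        Finset.sum_le_sum fun i _ => natDegree_pow_le_of_le _ (hf i)
    _ = s.sum (fun _ e => e) * d := by rw [Finsupp.sum, Finset.sum_mul]
    _ ≤ p.totalDegree * d := Nat.mul_le_mul_right _ (MvPolynomial.le_totalDegree hs)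

section PolyCurve

variable {F : Type*} [AddCommMonoid F] [Module ℝ F] {D : ℕ}

def polyCurve (A : Fin D → F) (t : ℝ) : F := ∑ j : Fin D, t ^ ((j : ℕ) + 1) • A j

def scaleCoeffs (s : ℝ) (A : Fin D → F) : Fin D → F := fun j => s ^ ((j : ℕ) + 1) • A j

@[simp]
theorem polyCurve_zero_left (t : ℝ) : polyCurve (0 : Fin D → F) t = 0 := by
  simp [polyCurve]

@[simp]
theorem polyCurve_zero_right (A : Fin D → F) : polyCurve A 0 = 0 := by
  simp [polyCurve]

theorem polyCurve_mul (A : Fin D → F) (s t : ℝ) :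
    polyCurve A (s * t) = polyCurve (scaleCoeffs s A) t := by
  simp only [polyCurve, scaleCoeffs, mul_pow, mul_comm (s ^ _), mul_smul]

theorem polyCurve_apply {ι : Type*} (A : Fin D → ι → ℝ) (t : ℝ) (i : ι) :
    polyCurve A t i = (∑ j : Fin D, monomial ((j : ℕ) + 1) (A j i)).eval t := by
  simp [polyCurve, eval_finsetSum, mul_comm]

theorem polyCurve_injective {ι : Type*} :
    Function.Injective (polyCurve (F := ι → ℝ) (D := D)) := by
  intro A B h
  ext j i
  have hi := congrArg (coeff · ((j : ℕ) + 1)) <|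
    Polynomial.funext fun t => by simpa only [polyCurve_apply] using congrFun (congrFun h t) i
  simpa [finsetSum_coeff, coeff_monomial, Fin.val_inj] using hi

end PolyCurve

section NormedPolyCurve

variable {F : Type*} [NormedAddCommGroup F] [NormedSpace ℝ F] {D : ℕ}

theorem continuous_polyCurve : Continuous fun p : (Fin D → F) × ℝ => polyCurve p.1 p.2 := by
  unfold polyCurve
  fun_prop

theorem exists_norm_scaleCoeffs_eq_one {A : Fin D → F} (hA : A ≠ 0) :
    ∃ s, ‖scaleCoeffs s A‖ = 1 := by
  obtain ⟨j, hj⟩ := Function.ne_iff.1 hA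
  have hj : 0 < ‖A j‖ := norm_pos_iff.2 hj
  set s := 1 + ‖A j‖⁻¹
  have hs : 1 ≤ ‖scaleCoeffs s A‖ := calc
    1 ≤ s * ‖A j‖ := by rw [add_mul, one_mul, inv_mul_cancel₀ hj.ne']; linarith
    _ ≤ s ^ ((j : ℕ) + 1) * ‖A j‖ := by
        gcongr
        exact le_self_pow₀ (le_add_of_nonneg_right (by positivity)) (by omega)
    _ = ‖scaleCoeffs s A j‖ := by
        rw [scaleCoeffs, norm_smul, Real.norm_of_nonneg (by positivity)]
    _ ≤ ‖scaleCoeffs s A‖ := norm_le_pi_norm _ j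
  have hcont : Continuous fun s => ‖scaleCoeffs s A‖ := by
    unfold scaleCoeffs
    fun_prop
  have h0 : scaleCoeffs 0 A = 0 := funext fun j => by simp [scaleCoeffs]
  exact intermediate_value_univ 0 s hcont ⟨by simp [h0], hs⟩

end NormedPolyCurve

section PolynomialMap

variable {σ ι : Type*} {Y : (σ → ℝ) → ι → ℝ} {P : ι → MvPolynomial σ ℝ}

theorem exists_polyCurve_eq_line (hpoly : ∀ x i, Y x i = MvPolynomial.eval x (P i)) {D : ℕ}
    (hD : ∀ i, (P i).totalDegree ≤ D) (x w : σ → ℝ) :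
    ∃ A : Fin D → ι → ℝ, ∀ t : ℝ, Y (x + t • w) = Y x + polyCurve A t := by
  set Q : ι → ℝ[X] := fun i => MvPolynomial.aeval (fun j => C (x j) + C (w j) * X) (P i)
  have hQ : ∀ i t, (Q i).eval t = Y (x + t • w) i := fun i t => by
    rw [hpoly, ← coe_aeval_eq_eval, ← AlgHom.comp_apply, MvPolynomial.comp_aeval,
      ← MvPolynomial.coe_aeval_eq_eval]
    simp only [aeval_add, aeval_mul, aeval_C, aeval_X, Algebra.algebraMap_self_apply]
    rw [show x + t • w = fun j => x j + w j * t from funext fun j => by simp [mul_comm]]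
    rfl
  have hdeg : ∀ i, (Q i).natDegree < D + 1 := fun i => Nat.lt_succ_of_le <|
    (MvPolynomial.natDegree_aeval_le (fun j => by compute_degree) _).trans <|
      (Nat.mul_one _).le.trans (hD i)
  refine ⟨fun j i => (Q i).coeff ((j : ℕ) + 1), fun t => funext fun i => ?_⟩
  have hQ0 := hQ i 0
  rw [zero_smul, add_zero] at hQ0
  rw [Pi.add_apply, ← hQ, ← hQ0, eval_eq_sum_range' (hdeg i), eval_eq_sum_range' (hdeg i),
    Finset.sum_range_succ', Finset.sum_range_succ', polyCurve, Finset.sum_apply]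
  simp only [Pi.smul_apply, smul_eq_mul]
  rw [Fin.sum_univ_eq_sum_range (fun j => t ^ (j + 1) * (Q i).coeff (j + 1))]
  simp [add_comm, mul_comm]

theorem exists_norm_eq_one_polyCurve_eq_line [Fintype ι]
    (hpoly : ∀ x i, Y x i = MvPolynomial.eval x (P i)) {D : ℕ} (hD : ∀ i, (P i).totalDegree ≤ D)
    (hY : ¬∃ c, ∀ x, Y x = c) (x : σ → ℝ) :
    ∃ (v : σ → ℝ) (B : Fin D → ι → ℝ), ‖B‖ = 1 ∧ ∀ t : ℝ, Y (x + t • v) = Y x + polyCurve B t := by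
  obtain ⟨z, hz⟩ : ∃ z, Y z ≠ Y x := not_forall.1 (not_exists.1 hY (Y x))
  obtain ⟨A, hA⟩ := exists_polyCurve_eq_line hpoly hD x (z - x)
  have hA0 : A ≠ 0 := by
    rintro rfl
    exact hz (by simpa using hA 1)
  obtain ⟨s, hs⟩ := exists_norm_scaleCoeffs_eq_one hA0
  refine ⟨s • (z - x), scaleCoeffs s A, hs, fun t => ?_⟩
  rw [smul_smul, mul_comm, hA, polyCurve_mul]

end PolynomialMap

theorem stmt8 {n m : ℕ} (Y : (Fin n → ℝ) → (Fin m → ℝ))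
    (P : Fin m → MvPolynomial (Fin n) ℝ)
    (hpoly : ∀ x i, Y x i = MvPolynomial.eval x (P i))
    (hnonconst : ¬ ∃ c : Fin m → ℝ, ∀ x, Y x = c) :
    IsClosed (nonProperSet Y) ∧
      ∀ q ∈ nonProperSet Y, ∃ φ : ℝ → (Fin m → ℝ),
        (∃ ps : Fin m → Polynomial ℝ, ∀ t i, φ t i = (ps i).eval t) ∧
        (¬ ∃ c : Fin m → ℝ, ∀ t, φ t = c) ∧
        Set.range φ ⊆ nonProperSet Y ∧ q ∈ Set.range φ := by
  have hY : Continuous Y := continuous_pi fun i =>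
    (funext fun x => (hpoly x i).symm) ▸ MvPolynomial.continuous_eval (P i)
  refine ⟨isClosed_nonProperSet hY, fun q hq => ?_⟩
  obtain ⟨x, hx, hxq⟩ := exists_seq_tendsto_of_mem_nonProperSet hY hq
  obtain ⟨D, hD⟩ : ∃ D, ∀ i, (P i).totalDegree ≤ D :=
    ⟨_, fun i => Finset.le_sup (f := fun i => (P i).totalDegree) (Finset.mem_univ i)⟩
  choose v B hB hline using fun k =>
    exists_norm_eq_one_polyCurve_eq_line hpoly hD hnonconst (x k)
  obtain ⟨A, hA, ψ, hψ, hBA⟩ :=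
    (isCompact_sphere 0 1).tendsto_subseq fun k => mem_sphere_zero_iff_norm.2 (hB k)
  refine ⟨fun t => q + polyCurve A t,
    ⟨fun i => C (q i) + ∑ j : Fin D, monomial ((j : ℕ) + 1) (A j i), fun t i => by
      simp [polyCurve_apply]⟩, ?_, ?_, 0, by simp⟩
  · rintro ⟨c, hc⟩
    have hA0 : A = 0 := polyCurve_injective <| funext fun t => by
      simpa [(hc 0).symm] using hc t
    simp [hA0] at hA
  · refine range_subset_nonProperSet_of_tendsto_line hY (v := v ∘ ψ) (hx.comp hψ.tendsto_atTop)
      (continuous_const.add (continuous_polyCurve.comp (continuous_const.prodMk continuous_id)))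
      fun c => ?_
    have hcont : Continuous fun A' : Fin D → Fin m → ℝ => polyCurve A' c :=
      continuous_polyCurve.comp (continuous_id.prodMk continuous_const)
    simp only [Function.comp_apply, hline]
    exact (hxq.comp hψ.tendsto_atTop).add ((hcont.tendsto A).comp hBA)
end

section
/- Let Y : M → N be a continuous map between locally compact Hausdorff topological spaces. Then the restriction of Y to a map M \ Y⁻¹(S_Y) → N \ S_Y is proper (the preimage in M \ Y⁻¹(S_Y) of every compact subset of N \ S_Y is compact), and S_Y is minimal with this property: for every closed subset S ⊆ N such that the restriction of Y to a map M \ Y⁻¹(S) → N \ S is proper, one has S_Y ⊆ S. -/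
theorem stmt14 {M N : Type*} [TopologicalSpace M] [LocallyCompactSpace M] [T2Space M]
    [TopologicalSpace N] [LocallyCompactSpace N] [T2Space N]
    (Y : M → N) (hY : Continuous Y) :
    (∀ K : Set N, K ⊆ (nonProperSet Y)ᶜ → IsCompact K → IsCompact (Y ⁻¹' K)) ∧
    (∀ S : Set N, IsClosed S →
      (∀ K : Set N, K ⊆ Sᶜ → IsCompact K → IsCompact (Y ⁻¹' K)) →
      nonProperSet Y ⊆ S) := by
  constructor
  · intro K hK hKc
    choose! U hU hUc using fun y (hy : y ∈ K) => not_not.mp (hK hy)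
    obtain ⟨t, htK, hcov⟩ := hKc.elim_nhds_subcover U hU
    have hcomp : IsCompact (⋃ x ∈ t, Y ⁻¹' closure (U x)) :=
      t.isCompact_biUnion (fun x hx => hUc x (htK x hx))
    refine hcomp.of_isClosed_subset (hKc.isClosed.preimage hY) ?_
    intro m hm
    obtain ⟨x, hx, hmx⟩ := Set.mem_iUnion₂.mp (hcov hm)
    exact Set.mem_iUnion₂.mpr ⟨x, hx, subset_closure hmx⟩
  · intro S hS hprop y hy
    by_contra hyS
    obtain ⟨K, hKn, hKs, hKc⟩ :=
      local_compact_nhds (hS.isOpen_compl.mem_nhds hyS)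
    have hcl : closure (interior K) ⊆ K := closure_minimal interior_subset hKc.isClosed
    exact hy ⟨interior K, interior_mem_nhds.mpr hKn,
      hprop _ (hcl.trans hKs) (hKc.of_isClosed_subset isClosed_closure hcl)⟩
end

section
/- Let Y : M → N be a continuous map between locally compact Hausdorff topological spaces. If the image Y(M) is open in N, then the frontier (topological boundary) of Y(M) is contained in S_Y. -/
theorem stmt15 {M N : Type*} [TopologicalSpace M] [LocallyCompactSpace M] [T2Space M]
    [TopologicalSpace N] [LocallyCompactSpace N] [T2Space N]
    (Y : M → N) (hY : Continuous Y) (hopen : IsOpen (Set.range Y)) :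
    frontier (Set.range Y) ⊆ nonProperSet Y := by
  intro y hy
  rintro ⟨U, hU, hK⟩
  have hyc : y ∈ closure (Set.range Y) := hy.1
  have hynot : y ∉ Set.range Y := by
    have h2 := hy.2
    rwa [hopen.interior_eq] at h2
  have hcomp : IsCompact (Set.range Y ∩ closure U) := by
    have := hK.image hY
    rwa [Set.image_preimage_eq_range_inter] at this
  have hclosed : IsClosed (Set.range Y ∩ closure U) := hcomp.isClosed
  have hmem : y ∈ closure (Set.range Y ∩ U) := by
    rw [mem_closure_iff_nhds]
    intro V hV
    obtain ⟨x, hx1, hx2⟩ := mem_closure_iff_nhds.1 hyc (V ∩ U) (Filter.inter_mem hV hU)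
    exact ⟨x, hx1.1, hx2, hx1.2⟩
  have : y ∈ Set.range Y ∩ closure U := by
    have hsub : closure (Set.range Y ∩ U) ⊆ Set.range Y ∩ closure U :=
      closure_minimal (Set.inter_subset_inter_right _ subset_closure) hclosed
    exact hsub hmem
  exact hynot this.1
end
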